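/- Let $J, K \subseteq S$ in $S_n$ and $x \in X_J^{-1} \cap X_K$. Then $x^{-1} W_J x \cap W_K = W_{x^{-1}Jx \cap K}$, where $x^{-1}Jx \cap K$ is the subset of adjacent transpositions $(i,i+1) \in K$ such that $(x(i), x(i+1)) \in J$ (as an unordered pair). -/

import Mathlib

open Equiv Pointwise

/-- The copy of `Sₙ` inside `Equiv.Perm ℕ`: permutations fixing every point `≥ n`
(we use points `0,…,n-1` instead of `1,…,n`). -/
def symN (n : ℕ) : Subgroup (Equiv.Perm ℕ) where
  carrier := {x | ∀ i, n ≤ i → x i = i}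
  one_mem' := fun _ _ => rfl
  mul_mem' := by
    intro a b ha hb i hi
    simp only [Set.mem_setOf_eq] at *
    simp [Equiv.Perm.mul_apply, hb i hi, ha i hi]
  inv_mem' := by
    intro a ha i hi
    simp only [Set.mem_setOf_eq] at *
    conv_lhs => rw [← ha i hi]
    simp

/-- The number of inversions (the Coxeter length in `Sₙ`). -/
def invNum (n : ℕ) (x : Equiv.Perm ℕ) : ℕ :=
  ((Finset.range n ×ˢ Finset.range n).filter
    (fun p => p.1 < p.2 ∧ x p.2 < x p.1)).card

/-- The adjacent transpositions `(k, k+1)` for `k ∈ J`. -/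
def gens (J : Set ℕ) : Set (Equiv.Perm ℕ) := (fun k => Equiv.swap k (k + 1)) '' J

/-- The parabolic subgroup `W_J`. -/
def parabolic (J : Set ℕ) : Subgroup (Equiv.Perm ℕ) := Subgroup.closure (gens J)

/-- `x ∈ X_J`: a minimal length left coset representative of `W_J` in `Sₙ`. -/
def isMinLeft (n : ℕ) (J : Set ℕ) (x : Equiv.Perm ℕ) : Prop :=
  x ∈ symN n ∧ ∀ w ∈ parabolic J, invNum n x ≤ invNum n (x * w)

/-- `x ∈ X_J⁻¹`: a minimal length right coset representative of `W_J` in `Sₙ`. -/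
def isMinRight (n : ℕ) (J : Set ℕ) (x : Equiv.Perm ℕ) : Prop :=
  x ∈ symN n ∧ ∀ w ∈ parabolic J, invNum n x ≤ invNum n (w * x)

/-- `i1` and `j1` lie in the same connected component of the graph `𝒥` with
edges `(k, k+1)` for `k ∈ J`. -/
def sameComp (J : Set ℕ) (i j : ℕ) : Prop :=
  ∀ t, min i j ≤ t → t < max i j → t ∈ J

/-- The vertex set of the connected component of the graph of `J` containing `a`. -/
def comp (J : Set ℕ) (a : ℕ) : Set ℕ := {b | sameComp J a b}

/-- `c` is a composition of `n`. -/
def isComposition (n : ℕ) (c : List ℕ) : Prop := c.sum = n ∧ ∀ k ∈ c, 0 < k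

/-- The `q`-th consecutive block determined by a composition `c`. -/
def blockSet (c : List ℕ) (q : ℕ) : Set ℕ := Set.Ico ((c.take q).sum) ((c.take (q + 1)).sum)

/-- The set of adjacent transpositions corresponding to a composition `c`:
those `(i, i+1)` with `i, i+1` in the same block. -/
def edgesOf (c : List ℕ) : Set ℕ := {i | ∃ q, i ∈ blockSet c q ∧ i + 1 ∈ blockSet c q}

/-- `i` indexes an edge `(i, i+1)` of the image graph `x⁻¹𝒥`, i.e. `(x i, x (i+1))`
is an edge of `𝒥` (as an unordered pair). -/
def imgEdges (x : Equiv.Perm ℕ) (J : Set ℕ) : Set ℕ :=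
  {i | ∃ t ∈ J, (x i = t ∧ x (i + 1) = t + 1) ∨ (x i = t + 1 ∧ x (i + 1) = t)}

/-! `W_J` is the group of permutations of `{0, …, n-1}` that keep every point in its connected
component of the path graph with edges `J`: generators do, and conversely bubble sort writes such a
permutation as a product of swaps, each of which exchanges a descent lying inside one component.
For `w ∈ x⁻¹ W_J x ∩ W_K` and any `i`, the points `i` and `w i` are joined by `K`-edges and
`x i`, `x (w i)` by `J`-edges. Minimality of `x` makes `x` increase along `K`-edges and `x⁻¹`
along `J`-edges, so `x` maps the interval between `i` and `w i` onto the one between `x i` and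
`x (w i)` by a translation; hence each edge of that interval lies in `x⁻¹Jx ∩ K`. -/

lemma sameComp_refl (J : Set ℕ) (i : ℕ) : sameComp J i i :=
  fun _ h₁ h₂ => by omega

lemma sameComp_comm {J : Set ℕ} {i j : ℕ} : sameComp J i j ↔ sameComp J j i := by
  simp only [sameComp, min_comm, max_comm]

lemma sameComp_trans {J : Set ℕ} {a b c : ℕ} (hab : sameComp J a b) (hbc : sameComp J b c) :
    sameComp J a c := by
  intro t h₁ h₂
  by_cases h : min a b ≤ t ∧ t < max a b
  · exact hab t h.1 h.2
  · exact hbc t (by omega) (by omega)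

lemma sameComp_succ {J : Set ℕ} {k : ℕ} (hk : k ∈ J) : sameComp J k (k + 1) := by
  intro t h₁ h₂
  obtain rfl : t = k := by omega
  exact hk

def compStabilizer (J : Set ℕ) : Subgroup (Perm ℕ) where
  carrier := {w | ∀ i, sameComp J i (w i)}
  one_mem' := sameComp_refl J
  mul_mem' {a b} ha hb i := sameComp_trans (hb i) (ha (b i))
  inv_mem' {a} ha i := by
    simpa [sameComp_comm] using ha (a⁻¹ i)

lemma swap_succ_mem_compStabilizer {J : Set ℕ} {k : ℕ} (hk : k ∈ J) :
    swap k (k + 1) ∈ compStabilizer J := by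
  intro i
  rw [swap_apply_def]
  split_ifs with h₁ h₂
  · subst h₁
    exact sameComp_succ hk
  · subst h₂
    exact sameComp_comm.1 (sameComp_succ hk)
  · exact sameComp_refl J i

lemma parabolic_le_compStabilizer (J : Set ℕ) : parabolic J ≤ compStabilizer J :=
  (Subgroup.closure_le _).2 <| by
    rintro _ ⟨k, hk, rfl⟩
    exact swap_succ_mem_compStabilizer hk

lemma compStabilizer_le_symN {n : ℕ} {J : Set ℕ} (hJ : ∀ k ∈ J, k + 1 < n) :
    compStabilizer J ≤ symN n := by
  intro w hw i hi
  by_contra hne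
  rcases Nat.lt_or_gt_of_ne hne with h | h
  · have := hJ _ (hw i (i - 1) (by omega) (by omega))
    omega
  · have := hJ _ (hw i i (by omega) (by omega))
    omega

lemma mem_of_mem_compStabilizer_of_succ_lt {J : Set ℕ} {w : Perm ℕ} (hw : w ∈ compStabilizer J)
    {i : ℕ} (hi : w (i + 1) < w i) : i ∈ J := by
  by_contra hiJ
  have h₁ : w i ≤ i := by
    by_contra h
    exact hiJ (hw i i (by omega) (by omega))
  have h₂ : i + 1 ≤ w (i + 1) := by
    by_contra h
    exact hiJ (hw (i + 1) i (by omega) (by omega))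
  omega

lemma add_sub_le_of_lt_succ {f : ℕ → ℕ} {a b : ℕ} (hf : ∀ k, a ≤ k → k < b → f k < f (k + 1))
    {c d : ℕ} (hac : a ≤ c) (hcd : c ≤ d) (hdb : d ≤ b) : f c + (d - c) ≤ f d := by
  induction d, hcd using Nat.le_induction with
  | base => omega
  | succ d hcd ih =>
    have := ih (by omega)
    have := hf d (by omega) (by omega)
    omega

lemma apply_lt_of_mem_symN {n : ℕ} {x : Perm ℕ} (hx : x ∈ symN n) {i : ℕ} (hi : i < n) :
    x i < n := by
  by_contra h
  have : x (x i) = x i := hx _ (not_lt.1 h)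
  have := x.injective this
  omega

lemma exists_succ_lt_of_ne_one {n : ℕ} {w : Perm ℕ} (hw : w ∈ symN n) (hne : w ≠ 1) :
    ∃ i, i + 1 < n ∧ w (i + 1) < w i := by
  by_contra! hmono
  refine hne (Equiv.ext fun i => ?_)
  have hstep : ∀ k, 0 ≤ k → k < n - 1 → w k < w (k + 1) := fun k _ hk =>
    (hmono k (by omega)).lt_of_ne (w.injective.ne (by omega))
  rcases Nat.lt_or_ge i n with hi | hi
  · have h₁ := add_sub_le_of_lt_succ hstep (Nat.zero_le 0) (Nat.zero_le i) (by omega)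
    have h₂ := add_sub_le_of_lt_succ hstep (Nat.zero_le i) (Nat.le_sub_one_of_lt hi) le_rfl
    have h₃ := apply_lt_of_mem_symN hw (show n - 1 < n by omega)
    simp only [Perm.coe_one, id_eq]
    omega
  · exact hw i hi

lemma invNum_inv {n : ℕ} {x : Perm ℕ} (hx : x ∈ symN n) : invNum n x⁻¹ = invNum n x := by
  have hx' := (symN n).inv_mem hx
  refine Finset.card_bij' (fun p _ => (x⁻¹ p.2, x⁻¹ p.1)) (fun q _ => (x q.2, x q.1))
    ?_ ?_ (fun p _ => by simp) (fun q _ => by simp)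
  · intro p hp
    simp only [Finset.mem_filter, Finset.mem_product, Finset.mem_range] at hp ⊢
    exact ⟨⟨apply_lt_of_mem_symN hx' hp.1.2, apply_lt_of_mem_symN hx' hp.1.1⟩, hp.2.2,
      by simpa using hp.2.1⟩
  · intro q hq
    simp only [Finset.mem_filter, Finset.mem_product, Finset.mem_range] at hq ⊢
    exact ⟨⟨apply_lt_of_mem_symN hx hq.1.2, apply_lt_of_mem_symN hx hq.1.1⟩, hq.2.2,
      by simpa using hq.2.1⟩

lemma swap_succ_lt_swap_succ {i a b : ℕ} (hab : a < b) (hne : ¬(a = i ∧ b = i + 1)) :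
    swap i (i + 1) a < swap i (i + 1) b := by
  simp only [swap_apply_def]
  split_ifs <;> omega

lemma swap_succ_lt_of_lt {n i a : ℕ} (hi : i + 1 < n) (ha : a < n) : swap i (i + 1) a < n := by
  rw [swap_apply_def]
  split_ifs <;> omega

lemma invNum_mul_swap_lt {n i : ℕ} {w : Perm ℕ} (hi : i + 1 < n) (hd : w (i + 1) < w i) :
    invNum n (w * swap i (i + 1)) < invNum n w := by
  set s := swap i (i + 1)
  have hinj : Function.Injective (Prod.map s s) := s.injective.prodMap s.injective
  unfold invNum
  rw [← Finset.card_image_of_injective _ hinj]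
  apply Finset.card_lt_card
  rw [Finset.ssubset_iff_of_subset]
  · refine ⟨(i, i + 1), by simp [hi, hd, show i < n by omega], ?_⟩
    simp only [Finset.mem_image, Finset.mem_filter, Prod.map, Prod.ext_iff, not_exists, not_and]
    intro p _ h₁ h₂
    have : p.1 = i + 1 := by simpa [s] using congrArg s h₁
    have : p.2 = i := by simpa [s] using congrArg s h₂
    omega
  · simp only [Finset.subset_iff, Finset.mem_image, Finset.mem_filter, Finset.mem_product,
      Finset.mem_range, forall_exists_index, and_imp]
    rintro _ p hp₁ hp₂ hlt hinv rfl
    rw [Perm.mul_apply, Perm.mul_apply] at hinv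
    have hne : ¬(p.1 = i ∧ p.2 = i + 1) := by
      rintro ⟨h₁, h₂⟩
      simp only [h₁, h₂, s, swap_apply_left, swap_apply_right] at hinv
      omega
    exact ⟨⟨swap_succ_lt_of_lt hi hp₁, swap_succ_lt_of_lt hi hp₂⟩,
      swap_succ_lt_swap_succ hlt hne, hinv⟩

lemma compStabilizer_le_parabolic {n : ℕ} {J : Set ℕ} (hJ : ∀ k ∈ J, k + 1 < n) :
    compStabilizer J ≤ parabolic J := by
  intro w hw
  induction h : invNum n w using Nat.strong_induction_on generalizing w with
  | _ m ih =>
  obtain rfl | hne := eq_or_ne w 1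
  · exact one_mem _
  obtain ⟨i, hin, hd⟩ := exists_succ_lt_of_ne_one (compStabilizer_le_symN hJ hw) hne
  have hs : swap i (i + 1) ∈ parabolic J :=
    Subgroup.subset_closure ⟨i, mem_of_mem_compStabilizer_of_succ_lt hw hd, rfl⟩
  have hws : w * swap i (i + 1) ∈ parabolic J :=
    ih _ (h ▸ invNum_mul_swap_lt hin hd) (mul_mem hw (parabolic_le_compStabilizer J hs)) rfl
  simpa using mul_mem hws hs

lemma isMinLeft.apply_lt_apply_succ {n : ℕ} {K : Set ℕ} {x : Perm ℕ} (hx : isMinLeft n K x)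
    {k : ℕ} (hk : k ∈ K) (hkn : k + 1 < n) : x k < x (k + 1) := by
  refine lt_of_le_of_ne (not_lt.1 fun h => ?_) (x.injective.ne (by omega))
  exact (hx.2 _ (Subgroup.subset_closure ⟨k, hk, rfl⟩)).not_gt (invNum_mul_swap_lt hkn h)

lemma parabolic_le_symN {n : ℕ} {J : Set ℕ} (hJ : ∀ k ∈ J, k + 1 < n) : parabolic J ≤ symN n :=
  (parabolic_le_compStabilizer J).trans (compStabilizer_le_symN hJ)

lemma isMinRight.isMinLeft_inv {n : ℕ} {J : Set ℕ} (hJ : ∀ k ∈ J, k + 1 < n) {x : Perm ℕ}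
    (hx : isMinRight n J x) : isMinLeft n J x⁻¹ := by
  refine ⟨(symN n).inv_mem hx.1, fun w hw => ?_⟩
  have hwx : w⁻¹ * x ∈ symN n := mul_mem (parabolic_le_symN hJ (inv_mem hw)) hx.1
  calc invNum n x⁻¹ = invNum n x := invNum_inv hx.1
    _ ≤ invNum n (w⁻¹ * x) := hx.2 _ (inv_mem hw)
    _ = invNum n (x⁻¹ * w) := by rw [← invNum_inv hwx, mul_inv_rev, inv_inv]

lemma sameComp_imgEdges_inter {n : ℕ} {J K : Set ℕ} (hJ : ∀ k ∈ J, k + 1 < n)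
    (hK : ∀ k ∈ K, k + 1 < n) {x : Perm ℕ} (hxJ : isMinRight n J x) (hxK : isMinLeft n K x)
    {a b : ℕ} (hKab : sameComp K a b) (hJab : sameComp J (x a) (x b)) :
    sameComp (imgEdges x J ∩ K) a b := by
  wlog hab : a ≤ b generalizing a b
  · exact sameComp_comm.1 (this (sameComp_comm.1 hKab) (sameComp_comm.1 hJab) (by omega))
  have hKab' : ∀ k, a ≤ k → k < b → k ∈ K := fun k h₁ h₂ => hKab k (by omega) (by omega)
  have hx : ∀ k, a ≤ k → k < b → x k < x (k + 1) := fun k h₁ h₂ =>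
    hxK.apply_lt_apply_succ (hKab' k h₁ h₂) (hK _ (hKab' k h₁ h₂))
  have hxab := add_sub_le_of_lt_succ hx le_rfl hab le_rfl
  have hJab' : ∀ t, x a ≤ t → t < x b → t ∈ J := fun t h₁ h₂ => hJab t (by omega) (by omega)
  have hxinv : ∀ t, x a ≤ t → t < x b → x⁻¹ t < x⁻¹ (t + 1) := fun t h₁ h₂ =>
    (hxJ.isMinLeft_inv hJ).apply_lt_apply_succ (hJab' t h₁ h₂) (hJ _ (hJab' t h₁ h₂))
  have hxinvab : a + (x b - x a) ≤ b := by
    simpa using add_sub_le_of_lt_succ hxinv le_rfl (by omega) le_rfl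
  have hshift : ∀ k, a ≤ k → k ≤ b → x k = x a + (k - a) := fun k h₁ h₂ => by
    have := add_sub_le_of_lt_succ hx le_rfl h₁ h₂
    have := add_sub_le_of_lt_succ hx h₁ h₂ le_rfl
    omega
  intro k h₁ h₂
  have := hshift k (by omega) (by omega)
  have := hshift (k + 1) (by omega) (by omega)
  exact ⟨⟨x k, hJab' _ (by omega) (by omega), .inl ⟨rfl, by omega⟩⟩, hKab' k (by omega) (by omega)⟩

lemma conj_swap_succ_mem_parabolic {J : Set ℕ} {x : Perm ℕ} {k : ℕ} (hk : k ∈ imgEdges x J) :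
    x * swap k (k + 1) * x⁻¹ ∈ parabolic J := by
  obtain ⟨t, ht, ⟨h₁, h₂⟩ | ⟨h₁, h₂⟩⟩ := hk <;>
    rw [← swap_apply_apply, h₁, h₂]
  · exact Subgroup.subset_closure ⟨t, ht, rfl⟩
  · exact swap_comm t (t + 1) ▸ Subgroup.subset_closure ⟨t, ht, rfl⟩

/-- Solomon's Lemma, type A: for `x ∈ X_J⁻¹ ∩ X_K`,
`x⁻¹ W_J x ⊓ W_K = W_{x⁻¹Jx ∩ K}`, where `x⁻¹Jx ∩ K` consists of those
`(i, i+1) ∈ K` with `(x i, x (i+1)) ∈ J` as an unordered pair. -/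
theorem stmt8 (n : ℕ) (J K : Set ℕ)
    (hJ : ∀ k ∈ J, k + 1 < n) (hK : ∀ k ∈ K, k + 1 < n)
    (x : Equiv.Perm ℕ) (hx : isMinRight n J x ∧ isMinLeft n K x) :
    (parabolic J).map (MulAut.conj x⁻¹).toMonoidHom ⊓ parabolic K
      = parabolic (imgEdges x J ∩ K) := by
  obtain ⟨hxJ, hxK⟩ := hx
  refine le_antisymm (fun w hw => ?_) ((Subgroup.closure_le _).2 ?_)
  · obtain ⟨hwJ, hwK⟩ := Subgroup.mem_inf.1 hw
    rw [Subgroup.mem_map_equiv] at hwJ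
    refine compStabilizer_le_parabolic (fun k hk => hK k hk.2) fun i =>
      sameComp_imgEdges_inter hJ hK hxJ hxK (parabolic_le_compStabilizer K hwK i) ?_
    simpa using parabolic_le_compStabilizer J hwJ (x i)
  · rintro _ ⟨k, ⟨hkJ, hkK⟩, rfl⟩
    refine Subgroup.mem_inf.2 ⟨Subgroup.mem_map_equiv.2 ?_, Subgroup.subset_closure ⟨k, hkK, rfl⟩⟩
    simpa using conj_swap_succ_mem_parabolic hkJ
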